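/- For every N ≥ 1 and every configuration of distinct points x₁, …, x_N ∈ 𝕋, there exists a configuration y₁, …, y_N ∈ 𝕋 such that: (i) min_{j≠k} |e^{iy_j} − e^{iy_k}| ≥ 2/(5N⁴); (ii) Σ_{j=1}^N |e^{ix_j} − e^{iy_j}| ≤ 1; and (iii) Σ_{j≠k} log(1/|e^{ix_j} − e^{ix_k}|) ≥ Σ_{j≠k} log(1/|e^{iy_j} − e^{iy_k}|) − N. -/

import Mathlib

open MeasureTheory Filter Finset
open scoped Real ENNReal Topology

noncomputable section

/-- Fundamental domain for the torus `𝕋 = ℝ/(2πℤ)`. -/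
def torusSet : Set ℝ := Set.Ioc (-Real.pi) Real.pi

/-- Lebesgue measure `dx` on the torus. -/
def lebT : Measure ℝ := volume.restrict torusSet

/-- The metric `(x,y) ↦ |e^{ix} - e^{iy}|` on the torus. -/
def torusDist (x y : ℝ) : ℝ :=
  ‖Complex.exp ((x : ℂ) * Complex.I) - Complex.exp ((y : ℂ) * Complex.I)‖

/-- The logarithmic kernel `log |sin((x-y)/2)|⁻¹`. -/
def logKernel (x y : ℝ) : ℝ := Real.log |Real.sin ((x - y) / 2)|⁻¹

/-- Logarithmic energy of a measure, in `[0,∞]`. -/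
def energy (μ : Measure ℝ) : ℝ≥0∞ := ∫⁻ x, ∫⁻ y, ENNReal.ofReal (logKernel x y) ∂μ ∂μ

/-- Cross logarithmic energy of two measures. -/
def crossEnergy (μ ν : Measure ℝ) : ℝ≥0∞ := ∫⁻ x, ∫⁻ y, ENNReal.ofReal (logKernel x y) ∂ν ∂μ

/-- Logarithmic potential `U^μ`. -/
def potential (μ : Measure ℝ) (x : ℝ) : ℝ≥0∞ := ∫⁻ y, ENNReal.ofReal (logKernel x y) ∂μ

-- Relative entropy `K(μ|ν) ∈ [0,∞]`.
open Classical in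
def relEntropy (μ ν : Measure ℝ) : ℝ≥0∞ :=
  if μ ≪ ν ∧ Integrable (fun x => Real.log ((μ.rnDeriv ν x).toReal)) μ then
    ENNReal.ofReal (∫ x, Real.log ((μ.rnDeriv ν x).toReal) ∂μ)
  else ⊤

/-- The reference measure `μ₀^V = e^{-V(x)} dx/(2π)`. -/
def mu0 (V : ℝ → ℝ) : Measure ℝ :=
  lebT.withDensity fun x => ENNReal.ofReal ((2 * Real.pi)⁻¹ * Real.exp (-V x))

/-- The free energy functional `F_β^V = β E(μ) + K(μ|μ₀^V)`. -/
def freeEnergy (β : ℝ) (V : ℝ → ℝ) (μ : Measure ℝ) : ℝ≥0∞ :=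
  ENNReal.ofReal β * energy μ + relEntropy μ (mu0 V)

/-- Probability measure on the torus. -/
def IsTorusProb (μ : Measure ℝ) : Prop := IsProbabilityMeasure μ ∧ μ torusSetᶜ = 0

/-- `μ` is the equilibrium measure: a minimizer of `F_β^V`. -/
def IsEquilibrium (β : ℝ) (V : ℝ → ℝ) (μ : Measure ℝ) : Prop :=
  IsTorusProb μ ∧ ∀ ν : Measure ℝ, IsTorusProb ν → freeEnergy β V μ ≤ freeEnergy β V ν

/-- Uniform probability measure `dx/(2π)` on the torus. -/
def unifT : Measure ℝ := lebT.withDensity fun _ => ENNReal.ofReal (2 * Real.pi)⁻¹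

/-- Truncated Hilbert-transform integral. -/
def pvHilbert (ψ : ℝ → ℝ) (x ε : ℝ) : ℝ :=
  -(2 * Real.pi)⁻¹ * ∫ t in {t : ℝ | t ∈ torusSet ∧ ε < torusDist x t}, ψ t / Real.tan ((x - t) / 2)

/-- Hilbert transform on the torus (principal value). -/
def HT (ψ : ℝ → ℝ) (x : ℝ) : ℝ := limUnder (𝓝[>] (0 : ℝ)) (pvHilbert ψ x)

/-- The space `C^{m,1}(𝕋)`. -/
def ContDiffLipT (m : ℕ) (f : ℝ → ℝ) : Prop :=
  Function.Periodic f (2 * Real.pi) ∧ ContDiff ℝ m f ∧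
    ∃ L : ℝ, ∀ x y, |iteratedDeriv m f x - iteratedDeriv m f y| ≤ L * torusDist x y

/-- Lipschitz seminorm with respect to the torus metric. -/
def lipConstT (f : ℝ → ℝ) : ℝ := sInf {L : ℝ | 0 ≤ L ∧ ∀ x y, |f x - f y| ≤ L * torusDist x y}

/-- Sobolev space `H¹(𝕋)` (absolutely continuous representative, weak derivative in `L²`). -/
def MemH1T (f : ℝ → ℝ) : Prop :=
  Function.Periodic f (2 * Real.pi) ∧ Continuous f ∧
    ∃ g : ℝ → ℝ, MemLp g 2 lebT ∧ ∀ x, f x = f (-Real.pi) + ∫ t in (-Real.pi)..x, g t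

/-- Sobolev space `H²(𝕋)`. -/
def MemH2T (f : ℝ → ℝ) : Prop :=
  Function.Periodic f (2 * Real.pi) ∧ Differentiable ℝ f ∧
    ∃ g : ℝ → ℝ, MemLp g 2 lebT ∧ ∀ x, deriv f x = deriv f (-Real.pi) + ∫ t in (-Real.pi)..x, g t

/-- The operator `ℒφ = -φ'' - 2πβ H(μ_β^V φ') - (log μ_β^V)' φ'`. -/
def Lop (β : ℝ) (dens : ℝ → ℝ) (φ : ℝ → ℝ) (x : ℝ) : ℝ :=
  -(deriv (deriv φ) x) - 2 * Real.pi * β * HT (fun y => dens y * deriv φ y) x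
    - deriv (fun y => Real.log (dens y)) x * deriv φ x

/-- Fourier coefficients on the torus. -/
def fourierCoefT (ψ : ℝ → ℝ) (k : ℤ) : ℂ :=
  (2 * Real.pi : ℂ)⁻¹ * ∫ x in torusSet, (ψ x : ℂ) * Complex.exp (-(k : ℂ) * (x : ℂ) * Complex.I)

/-- Reference product measure on `𝕋^N`. -/
def refN (N : ℕ) : Measure (Fin N → ℝ) := Measure.pi fun _ => lebT

/-- Interaction weight of the Gibbs measure. -/
def interWeight (β : ℝ) (V : ℝ → ℝ) (N : ℕ) (x : Fin N → ℝ) : ℝ :=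
  (∏ p ∈ Finset.univ.offDiag, torusDist (x p.1) (x p.2) ^ (β / N)) *
    ∏ i, Real.exp (-V (x i))

/-- Partition function. -/
def ZN (β : ℝ) (V : ℝ → ℝ) (N : ℕ) : ℝ≥0∞ :=
  ∫⁻ x, ENNReal.ofReal (interWeight β V N x) ∂refN N

/-- The Gibbs measure `ℙ_N`. -/
def PN (β : ℝ) (V : ℝ → ℝ) (N : ℕ) : Measure (Fin N → ℝ) :=
  (ZN β V N)⁻¹ • (refN N).withDensity fun x => ENNReal.ofReal (interWeight β V N x)

/-- Empirical measure of a configuration. -/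
def empMeasure (N : ℕ) (x : Fin N → ℝ) : Measure ℝ := (N : ℝ≥0∞)⁻¹ • ∑ i, Measure.dirac (x i)

/-- Wasserstein-1 distance via Kantorovich-Rubinstein duality. -/
def W1 (μ ν : Measure ℝ) : ℝ :=
  sSup {d : ℝ | ∃ f : ℝ → ℝ, (∀ x y, |f x - f y| ≤ torusDist x y) ∧
    d = (∫ z, f z ∂μ) - ∫ z, f z ∂ν}

/-- Linear statistics fluctuation `ν_N(ψ)` as a function on `𝕋^N`. -/
def nuNf (μ : Measure ℝ) (N : ℕ) (ψ : ℝ → ℝ) (x : Fin N → ℝ) : ℝ :=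
  Real.sqrt N * ((N : ℝ)⁻¹ * ∑ i, ψ (x i) - ∫ y, ψ y ∂μ)

/-- Partial derivative in coordinate `j`. -/
def pderiv (N : ℕ) (f : (Fin N → ℝ) → ℝ) (j : Fin N) (x : Fin N → ℝ) : ℝ :=
  deriv (fun t => f (Function.update x j t)) (x j)

/-- Second partial derivative in coordinate `j`. -/
def pderiv2 (N : ℕ) (f : (Fin N → ℝ) → ℝ) (j : Fin N) (x : Fin N → ℝ) : ℝ :=
  iteratedDeriv 2 (fun t => f (Function.update x j t)) (x j)

/-- Generator `ℒ_N`. -/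
def genL (N : ℕ) (β : ℝ) (V : ℝ → ℝ) (f : (Fin N → ℝ) → ℝ) (x : Fin N → ℝ) : ℝ :=
  (∑ j, pderiv2 N f j x)
    + (β / N) * ∑ p ∈ Finset.univ.offDiag, pderiv N f p.1 x / Real.tan ((x p.1 - x p.2) / 2)
    - ∑ j, deriv V (x j) * pderiv N f j x

/-- Kernel `(g(x) - g(y))/(2 tan((x-y)/2))`, with diagonal value `g'(x)`. -/
def Kdiag (g : ℝ → ℝ) (x y : ℝ) : ℝ :=
  if Real.sin ((x - y) / 2) = 0 then deriv g x else (g x - g y) / (2 * Real.tan ((x - y) / 2))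

/-- Double integral of a kernel against `ν_N ⊗ ν_N`. -/
def doubleNu (μ : Measure ℝ) (N : ℕ) (K : ℝ → ℝ → ℝ) (x : Fin N → ℝ) : ℝ :=
  (N : ℝ) * (((N : ℝ)⁻¹) ^ 2 * ∑ i, ∑ j, K (x i) (x j)
    - (N : ℝ)⁻¹ * ∑ i, ∫ y, K (x i) y ∂μ
    - (N : ℝ)⁻¹ * ∑ j, ∫ y, K y (x j) ∂μ
    + ∫ y, ∫ z, K y z ∂μ ∂μ)

/-- The error term `ζ_N(φ)`. -/
def zetaN (μ : Measure ℝ) (N : ℕ) (φ : ℝ → ℝ) (x : Fin N → ℝ) : ℝ :=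
  doubleNu μ N (Kdiag (deriv φ)) x - (N : ℝ)⁻¹ * ∑ i, deriv (deriv φ) (x i)

/-- Weak formulation of `ℒu = f`. -/
def WeakLSol (β : ℝ) (dens : ℝ → ℝ) (μ : Measure ℝ) (u f : ℝ → ℝ) : Prop :=
  ∀ χ : ℝ → ℝ, ContDiff ℝ 1 χ → Function.Periodic χ (2 * Real.pi) →
    (∫ x, deriv u x * deriv χ x ∂μ)
      - 2 * Real.pi * β * ∫ x, HT (fun y => dens y * deriv u y) x * χ x ∂μ
      = ∫ x, f x * χ x ∂μ

end

/-! Reduce the points to `[0, 2π)` and sort them. Pushing the `k`-th point forward by `kδ` and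
rescaling by `c = 2π / (2π + Nδ)` makes both arcs between any two points at least `c` times their
old lengths plus `cδ`. By concavity of `sin` on `[0, π]` the chordal distances then shrink by at
most the factor `c` and stay at least `2cδ/π`, while each point moves by at most `Nδ`. With
`δ = 1/(2N²)` this gives the separation, a total displacement `≤ 1/2`, and an energy increase
of at most `N² log c⁻¹ ≤ N/(4π)`. -/

open Real

lemma torusDist_eq_norm_exp_sub_one (a b : ℝ) :
    torusDist a b = ‖Complex.exp (Complex.I * (a - b : ℝ)) - 1‖ := by
  have h : Complex.exp (a * Complex.I) - Complex.exp (b * Complex.I) =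
      Complex.exp (b * Complex.I) * (Complex.exp (Complex.I * (a - b : ℝ)) - 1) := by
    rw [mul_sub, ← Complex.exp_add]
    push_cast
    ring_nf
  rw [torusDist, h, norm_mul, Complex.norm_exp_ofReal_mul_I, one_mul]

lemma torusDist_nonneg (a b : ℝ) : 0 ≤ torusDist a b := norm_nonneg _

lemma torusDist_comm (a b : ℝ) : torusDist a b = torusDist b a := norm_sub_rev _ _

lemma torusDist_le_abs_sub (a b : ℝ) : torusDist a b ≤ |a - b| := by
  rw [torusDist_eq_norm_exp_sub_one]
  simpa only [Real.norm_eq_abs] using norm_exp_I_mul_ofReal_sub_one_le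

lemma torusDist_eq_two_mul_sin {a b : ℝ} (hab : a ≤ b) (hba : b - a ≤ 2 * π) :
    torusDist a b = 2 * sin ((b - a) / 2) := by
  rw [torusDist_comm, torusDist_eq_norm_exp_sub_one, Complex.norm_exp_I_mul_ofReal_sub_one,
    Real.norm_eq_abs, abs_of_nonneg]
  exact mul_nonneg zero_le_two (sin_nonneg_of_nonneg_of_le_pi (by linarith) (by linarith))

lemma torusDist_toIcoMod_left (a b : ℝ) :
    torusDist (toIcoMod two_pi_pos 0 a) b = torusDist a b := by
  rw [toIcoMod, torusDist, torusDist, zsmul_eq_mul]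
  push_cast
  rw [sub_mul, Complex.exp_sub, mul_assoc, Complex.exp_int_mul_two_pi_mul_I, div_one]

lemma torusDist_toIcoMod (a b : ℝ) :
    torusDist (toIcoMod two_pi_pos 0 a) (toIcoMod two_pi_pos 0 b) = torusDist a b := by
  rw [torusDist_toIcoMod_left, torusDist_comm, torusDist_toIcoMod_left, torusDist_comm]

lemma mul_sin_le_sin_mul {l u : ℝ} (hl0 : 0 ≤ l) (hl1 : l ≤ 1) (hu0 : 0 ≤ u) (huπ : u ≤ π) :
    l * sin u ≤ sin (l * u) := by
  simpa using strictConcaveOn_sin_Icc.concaveOn.2 ⟨le_rfl, pi_pos.le⟩ ⟨hu0, huπ⟩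
    (sub_nonneg.2 hl1) hl0 (by ring)

lemma min_sin_half_le_sin_half {L M t : ℝ} (hL : 0 ≤ L) (hM : 0 ≤ M) (hLt : L ≤ t)
    (htM : M ≤ 2 * π - t) : min (sin (L / 2)) (sin (M / 2)) ≤ sin (t / 2) := by
  have h := strictConcaveOn_sin_Icc.concaveOn.min_le_of_mem_Icc
    (x := L / 2) (y := π - M / 2) (z := t / 2) ⟨by linarith, by linarith⟩ ⟨by linarith, by linarith⟩
    ⟨by linarith, by linarith⟩
  rwa [sin_pi_sub] at h

lemma mul_torusDist_le_torusDist {a b a' b' c : ℝ} (hc : 0 ≤ c) (hab : a ≤ b)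
    (hba : b - a ≤ 2 * π) (hle : c * (b - a) ≤ b' - a')
    (hle' : c * (2 * π - (b - a)) ≤ 2 * π - (b' - a')) :
    c * torusDist a b ≤ torusDist a' b' := by
  have hc1 : c ≤ 1 := by nlinarith [pi_pos]
  have hΔ : 0 ≤ c * (b - a) := mul_nonneg hc (by linarith)
  have hΔ' : 0 ≤ c * (2 * π - (b - a)) := mul_nonneg hc (by linarith)
  rw [torusDist_eq_two_mul_sin hab hba, torusDist_eq_two_mul_sin (by linarith) (by linarith)]
  have hmin := min_sin_half_le_sin_half hΔ hΔ' hle hle'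
  have hleft : c * sin ((b - a) / 2) ≤ sin (c * (b - a) / 2) := by
    rw [mul_div_assoc]
    exact mul_sin_le_sin_mul hc hc1 (by linarith) (by linarith)
  have hright : c * sin ((b - a) / 2) ≤ sin (c * (2 * π - (b - a)) / 2) := by
    rw [mul_div_assoc, show (2 * π - (b - a)) / 2 = π - (b - a) / 2 by ring]
    have := mul_sin_le_sin_mul hc hc1 (u := π - (b - a) / 2) (by linarith) (by linarith)
    rwa [sin_pi_sub] at this
  linarith [le_min hleft hright]

lemma two_mul_div_pi_le_torusDist {a b ε : ℝ} (hε : 0 ≤ ε) (hle : ε ≤ b - a)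
    (hle' : ε ≤ 2 * π - (b - a)) : 2 * ε / π ≤ torusDist a b := by
  rw [torusDist_eq_two_mul_sin (by linarith) (by linarith)]
  have hmin := min_sin_half_le_sin_half hε hε hle hle'
  have hjordan := mul_le_sin (x := ε / 2) (by linarith) (by linarith)
  rw [min_self] at hmin
  have : 2 * ε / π = 2 * (2 / π * (ε / 2)) := by ring
  linarith

lemma sum_log_inv_le_of_mul_le {α : Type*} (s : Finset α) {d d' : α → ℝ} {c : ℝ} (hc : 0 < c)
    (hd : ∀ p ∈ s, 0 < d p) (hdd' : ∀ p ∈ s, c * d p ≤ d' p) :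
    ∑ p ∈ s, log (d' p)⁻¹ ≤ ∑ p ∈ s, log (d p)⁻¹ + #s * log c⁻¹ := by
  rw [← nsmul_eq_mul, ← sum_const, ← sum_add_distrib]
  refine sum_le_sum fun p hp => ?_
  have hcd := mul_pos hc (hd p hp)
  have := log_le_log hcd (hdd' p hp)
  rw [log_mul hc.ne' (hd p hp).ne'] at this
  simp only [log_inv]
  linarith

noncomputable def spreadFactor (n : ℕ) (δ : ℝ) : ℝ := 2 * π / (2 * π + n * δ)

section spreadFactor

variable {n : ℕ} {δ : ℝ}

lemma spreadFactor_pos (hδ : 0 ≤ δ) : 0 < spreadFactor n δ := by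
  unfold spreadFactor
  positivity

lemma spreadFactor_le_one (hδ : 0 ≤ δ) : spreadFactor n δ ≤ 1 := by
  rw [spreadFactor, div_le_one (by positivity)]
  exact le_add_of_nonneg_right (by positivity)

lemma spreadFactor_mul (hδ : 0 ≤ δ) : spreadFactor n δ * (2 * π + n * δ) = 2 * π :=
  div_mul_cancel₀ _ (by positivity)

lemma log_inv_spreadFactor_le (hδ : 0 ≤ δ) : log (spreadFactor n δ)⁻¹ ≤ n * δ / (2 * π) := by
  have h := log_le_sub_one_of_pos (inv_pos.2 (spreadFactor_pos (n := n) hδ))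
  rw [spreadFactor, inv_div, add_div, div_self (by positivity), add_sub_cancel_left] at h
  rwa [spreadFactor, inv_div, add_div, div_self (by positivity)]

end spreadFactor

noncomputable def spread {ι : Type*} (θ : ι → ℝ) (r : ι → ℕ) (n : ℕ) (δ : ℝ) (i : ι) : ℝ :=
  spreadFactor n δ * (θ i + r i * δ)

section spread

variable {ι : Type*} {θ : ι → ℝ} {r : ι → ℕ} {n : ℕ} {δ : ℝ}

lemma spread_arc_bounds (hr : ∀ i, r i < n) (hδ : 0 ≤ δ) {i j : ι} (hij : r i < r j) :
    spreadFactor n δ * (θ j - θ i) + spreadFactor n δ * δ ≤ spread θ r n δ j - spread θ r n δ i ∧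
      spreadFactor n δ * (2 * π - (θ j - θ i)) + spreadFactor n δ * δ ≤
        2 * π - (spread θ r n δ j - spread θ r n δ i) := by
  have hc := (spreadFactor_pos (n := n) hδ).le
  have hm : (1 : ℝ) ≤ r j - r i := by
    rw [le_sub_iff_add_le']; exact_mod_cast hij
  have hmn : (r j : ℝ) - r i + 1 ≤ n := by
    have : (r j : ℝ) + 1 ≤ n := by exact_mod_cast hr j
    linarith [(Nat.cast_nonneg (r i) : (0 : ℝ) ≤ r i)]
  have hdiff : spread θ r n δ j - spread θ r n δ i =
      spreadFactor n δ * (θ j - θ i) + spreadFactor n δ * ((r j - r i) * δ) := by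
    unfold spread; ring
  rw [hdiff]
  constructor
  · nlinarith [mul_nonneg hc (mul_nonneg (sub_nonneg.2 hm) hδ)]
  · nlinarith [spreadFactor_mul (n := n) hδ, mul_nonneg hc (mul_nonneg (sub_nonneg.2 hmn) hδ)]

lemma mul_torusDist_le_torusDist_spread (hθ : ∀ i, θ i ∈ Set.Ico 0 (2 * π)) (hr : ∀ i, r i < n)
    (hmono : ∀ i j, r i < r j → θ i ≤ θ j) (hδ : 0 ≤ δ) {i j : ι} (hij : r i ≠ r j) :
    spreadFactor n δ * torusDist (θ i) (θ j) ≤ torusDist (spread θ r n δ i) (spread θ r n δ j) := by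
  wlog hlt : r i < r j generalizing i j
  · rw [torusDist_comm, torusDist_comm (spread θ r n δ i)]
    exact this hij.symm (hij.lt_or_gt.resolve_left hlt)
  obtain ⟨hle, hle'⟩ := spread_arc_bounds hr hδ hlt
  have hcδ := mul_nonneg (spreadFactor_pos (n := n) hδ).le hδ
  exact mul_torusDist_le_torusDist (spreadFactor_pos hδ).le (hmono i j hlt)
    (by linarith [(hθ i).1, (hθ j).2]) (by linarith) (by linarith)

lemma two_mul_div_pi_le_torusDist_spread (hθ : ∀ i, θ i ∈ Set.Ico 0 (2 * π))
    (hr : ∀ i, r i < n) (hmono : ∀ i j, r i < r j → θ i ≤ θ j) (hδ : 0 ≤ δ) {i j : ι}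
    (hij : r i ≠ r j) :
    2 * (spreadFactor n δ * δ) / π ≤ torusDist (spread θ r n δ i) (spread θ r n δ j) := by
  wlog hlt : r i < r j generalizing i j
  · rw [torusDist_comm]
    exact this hij.symm (hij.lt_or_gt.resolve_left hlt)
  obtain ⟨hle, hle'⟩ := spread_arc_bounds hr hδ hlt
  have hc := (spreadFactor_pos (n := n) hδ).le
  have hΔ : 0 ≤ θ j - θ i := sub_nonneg.2 (hmono i j hlt)
  have hΔ' : 0 ≤ 2 * π - (θ j - θ i) := by linarith [(hθ i).1, (hθ j).2]
  exact two_mul_div_pi_le_torusDist (mul_nonneg hc hδ) (by nlinarith) (by nlinarith)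

lemma torusDist_spread_le (hθ : ∀ i, θ i ∈ Set.Ico 0 (2 * π)) (hr : ∀ i, r i < n) (hδ : 0 ≤ δ)
    (i : ι) : torusDist (θ i) (spread θ r n δ i) ≤ n * δ := by
  have hc := spreadFactor_pos (n := n) hδ
  have hc1 := spreadFactor_le_one (n := n) hδ
  have hcn := spreadFactor_mul (n := n) hδ
  have hri : (r i : ℝ) ≤ n := by exact_mod_cast (hr i).le
  have hθi := hθ i
  refine (torusDist_le_abs_sub _ _).trans (abs_le.2 ⟨?_, ?_⟩) <;> unfold spread
  · nlinarith [mul_nonneg (sub_nonneg.2 hc1) hθi.1, mul_le_mul_of_nonneg_left hri hδ,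
      mul_nonneg (sub_nonneg.2 hc1) (mul_nonneg (Nat.cast_nonneg (r i)) hδ)]
  · nlinarith [mul_nonneg (mul_nonneg hc.le (Nat.cast_nonneg (r i))) hδ,
      mul_le_mul_of_nonneg_left hθi.2.le (sub_nonneg.2 hc1),
      mul_nonneg (sub_nonneg.2 hc1) (mul_nonneg (Nat.cast_nonneg n) hδ)]

end spread

lemma exists_spread {N : ℕ} (x : Fin N → ℝ) {δ : ℝ} (hδ : 0 ≤ δ) :
    ∃ y : Fin N → ℝ,
      (∀ i j, i ≠ j → spreadFactor N δ * torusDist (x i) (x j) ≤ torusDist (y i) (y j) ∧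
        2 * (spreadFactor N δ * δ) / π ≤ torusDist (y i) (y j)) ∧
      ∀ i, torusDist (x i) (y i) ≤ N * δ := by
  set θ : Fin N → ℝ := fun i => toIcoMod two_pi_pos 0 (x i)
  have hθ : ∀ i, θ i ∈ Set.Ico 0 (2 * π) := fun i => toIcoMod_mem_Ico' _ _
  set r : Fin N → ℕ := fun i => (Tuple.sort θ).symm i
  have hr : ∀ i, r i < N := fun i => Fin.isLt _
  have hmono : ∀ i j, r i < r j → θ i ≤ θ j := fun i j hlt => by
    simpa using Tuple.monotone_sort θ (Fin.le_iff_val_le_val.2 hlt.le)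
  have hinj : ∀ i j, i ≠ j → r i ≠ r j := fun i j hij h =>
    hij ((Tuple.sort θ).symm.injective (Fin.ext h))
  refine ⟨spread θ r N δ, fun i j hij => ?_, fun i => ?_⟩
  · rw [← torusDist_toIcoMod]
    exact ⟨mul_torusDist_le_torusDist_spread hθ hr hmono hδ (hinj i j hij),
      two_mul_div_pi_le_torusDist_spread hθ hr hmono hδ (hinj i j hij)⟩
  · rw [← torusDist_toIcoMod_left]
    exact torusDist_spread_le hθ hr hδ i

lemma two_div_five_mul_pow_four_le {N : ℕ} (hN : 2 ≤ N) :
    2 / (5 * (N : ℝ) ^ 4) ≤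
      2 * (spreadFactor N (2 * (N : ℝ) ^ 2)⁻¹ * (2 * (N : ℝ) ^ 2)⁻¹) / π := by
  have hN' : (2 : ℝ) ≤ N := by exact_mod_cast hN
  have hπ := pi_pos
  unfold spreadFactor
  rw [div_le_div_iff₀ (by positivity) hπ]
  field_simp
  nlinarith [pi_lt_four, pow_le_pow_left₀ (by norm_num) hN' 2,
    mul_le_mul_of_nonneg_left hN' (sq_nonneg (N : ℝ))]

lemma mul_mul_inv_two_mul_sq_le_one {N : ℕ} : (N : ℝ) * (N * (2 * (N : ℝ) ^ 2)⁻¹) ≤ 1 := by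
  rcases N.eq_zero_or_pos with rfl | hN
  · simp
  · field_simp
    norm_num

lemma card_offDiag_mul_log_inv_spreadFactor_le {N : ℕ} :
    #(univ : Finset (Fin N)).offDiag * log (spreadFactor N (2 * (N : ℝ) ^ 2)⁻¹)⁻¹ ≤ N := by
  rcases N.eq_zero_or_pos with rfl | hN
  · simp
  have hN' : (0 : ℝ) < N := by exact_mod_cast hN
  have hcard : (#(univ : Finset (Fin N)).offDiag : ℝ) ≤ N ^ 2 := by
    rw [offDiag_card, card_univ, Fintype.card_fin, sq]
    exact_mod_cast Nat.sub_le _ _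
  have hδ : (0 : ℝ) ≤ (2 * (N : ℝ) ^ 2)⁻¹ := by positivity
  have hlog := log_inv_spreadFactor_le (n := N) hδ
  have hlog0 : 0 ≤ log (spreadFactor N (2 * (N : ℝ) ^ 2)⁻¹)⁻¹ :=
    log_nonneg ((one_le_inv₀ (spreadFactor_pos hδ)).2 (spreadFactor_le_one hδ))
  calc _ ≤ (N : ℝ) ^ 2 * (N * (2 * (N : ℝ) ^ 2)⁻¹ / (2 * π)) :=
        mul_le_mul hcard hlog hlog0 (by positivity)
    _ = N / (4 * π) := by field_simp; ring
    _ ≤ N := div_le_self hN'.le (by linarith [pi_gt_three])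

theorem configuration_regularization_general
    (N : ℕ) (x : Fin N → ℝ)
    (hdist : ∀ i j : Fin N, i ≠ j → torusDist (x i) (x j) ≠ 0) :
    ∃ y : Fin N → ℝ,
      (∀ i j : Fin N, i ≠ j → 2 / (5 * (N : ℝ) ^ 4) ≤ torusDist (y i) (y j)) ∧
      (∑ i, torusDist (x i) (y i)) ≤ 1 ∧
      (∑ p ∈ Finset.univ.offDiag, Real.log (torusDist (y p.1) (y p.2))⁻¹) - N ≤
        ∑ p ∈ Finset.univ.offDiag, Real.log (torusDist (x p.1) (x p.2))⁻¹ := by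
  set δ : ℝ := (2 * (N : ℝ) ^ 2)⁻¹
  have hδ : 0 ≤ δ := by positivity
  obtain ⟨y, hpair, hmove⟩ := exists_spread x hδ
  refine ⟨y, fun i j hij => ?_, ?_, ?_⟩
  · have h2N : 2 ≤ N := by
      have := Fin.val_ne_of_ne hij
      omega
    exact (two_div_five_mul_pow_four_le h2N).trans (hpair i j hij).2
  · calc ∑ i, torusDist (x i) (y i) ≤ ∑ _i : Fin N, N * δ := sum_le_sum fun i _ => hmove i
      _ ≤ 1 := by
        rw [sum_const, card_univ, Fintype.card_fin, nsmul_eq_mul]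
        exact mul_mul_inv_two_mul_sq_le_one
  · have hsum := sum_log_inv_le_of_mul_le univ.offDiag (spreadFactor_pos hδ)
      (fun p hp => (torusDist_nonneg _ _).lt_of_ne' (hdist _ _ (mem_offDiag.1 hp).2.2))
      (fun p hp => (hpair _ _ (mem_offDiag.1 hp).2.2).1)
    linarith [card_offDiag_mul_log_inv_spreadFactor_le (N := N)]

/-- Regularization of a configuration of distinct points on the torus:
well-separated points, close to the original ones, with almost smaller logarithmic
interaction energy. -/
theorem configuration_regularization
    (N : ℕ) (hN : 1 ≤ N) (x : Fin N → ℝ)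
    (hdist : ∀ i j : Fin N, i ≠ j → torusDist (x i) (x j) ≠ 0) :
    ∃ y : Fin N → ℝ,
      (∀ i j : Fin N, i ≠ j → 2 / (5 * (N : ℝ) ^ 4) ≤ torusDist (y i) (y j)) ∧
      (∑ i, torusDist (x i) (y i)) ≤ 1 ∧
      (∑ p ∈ Finset.univ.offDiag, Real.log (torusDist (y p.1) (y p.2))⁻¹) - N ≤
        ∑ p ∈ Finset.univ.offDiag, Real.log (torusDist (x p.1) (x p.2))⁻¹ :=
  configuration_regularization_general N x hdist
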